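/- For every pair of complementary matrices (m₁,n₁),(m₂,n₂) (a PCM), the element (det(m₁) + det(n₁)) − (det(m₂) + det(n₂)) lies in the kernel of φ_W; that is, the ideal Λ₂ is a subideal of I(X). -/

import Mathlib

open MvPolynomial

/-! Setup following "Rees algebras of ideals submaximally generated by quadrics".
`R = K[x_1, …, x_d]`, `I = (x_i x_j (i ≠ j), x_k^2 - x_d^2 (k ≠ d))`,
`W = K[w_{ij} : 1 ≤ i ≤ j ≤ d, (i,j) ≠ (d,d)]` with `w_{ij} = w_{ji}`, `w_{dd} = 0`,
`φ_W : W → R`, `w_{ij} ↦ g_{ij}`, `I(X) = ker φ_W`, and the candidate ideal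
`Λ = Λ₀ + Λ₁ + Λ₂` built from 2×2 minors of the symmetric matrix `M = (w_{ij})`. -/

/-- 1-based index set `{1, …, d}`. -/
abbrev Idx (d : ℕ) : Type := (Set.Icc 1 d : Set ℕ)

/-- Index set for the variables `w_{ij}`, `1 ≤ i ≤ j ≤ d`, `(i,j) ≠ (d,d)`. -/
abbrev SymIdx (d : ℕ) : Type :=
  {p : Idx d × Idx d // p.1 ≤ p.2 ∧ ¬(p.1.1 = d ∧ p.2.1 = d)}

/-- The entry `w_{ij}` of `M` as an element of `W`, with the conventions
`w_{ij} = w_{ji}` and `w_{dd} = 0`. -/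
noncomputable def wv (K : Type*) [Field K] (d : ℕ) (i j : Idx d) :
    MvPolynomial (SymIdx d) K :=
  if h : (min i j).1 = d ∧ (max i j).1 = d then 0
  else X (⟨(min i j, max i j), ⟨min_le_max, h⟩⟩ : SymIdx d)

/-- The last variable `x_d` of `R = K[x_1, …, x_d]`. -/
noncomputable def xd (K : Type*) [Field K] (d : ℕ) : MvPolynomial (Idx d) K :=
  if h : 1 ≤ d then X (⟨d, Set.mem_Icc.mpr ⟨h, le_rfl⟩⟩ : Idx d) else 0

/-- The quadrics `g_{ij} = x_i x_j` (for `i ≠ j`) and `g_{ii} = x_i ^ 2 - x_d ^ 2`. -/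
noncomputable def gq (K : Type*) [Field K] (d : ℕ) (i j : Idx d) : MvPolynomial (Idx d) K :=
  if i = j then X i ^ 2 - xd K d ^ 2 else X i * X j

/-- The `K`-algebra map `φ_W : W → R`, `w_{ij} ↦ g_{ij}`. -/
noncomputable def phiW (K : Type*) [Field K] (d : ℕ) :
    MvPolynomial (SymIdx d) K →ₐ[K] MvPolynomial (Idx d) K :=
  aeval (fun p : SymIdx d => gq K d p.1.1 p.1.2)

/-- `I(X) = ker φ_W`, the defining ideal of the special fiber ring `F(I)`. -/
noncomputable def IX (K : Type*) [Field K] (d : ℕ) : Ideal (MvPolynomial (SymIdx d) K) :=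
  RingHom.ker (phiW K d).toRingHom

/-- A `2 × 2` submatrix of the symmetric matrix `M = (w_{ij})`, recorded by its (ordered)
rows `r1 < r2` and columns `c1 < c2`. -/
structure Sub2 (d : ℕ) where
  r1 : Idx d
  r2 : Idx d
  c1 : Idx d
  c2 : Idx d
  hr : r1 < r2
  hc : c1 < c2

/-- The determinant of a `2 × 2` submatrix of `M`, i.e. the minor `[r1 r2 | c1 c2]`. -/
noncomputable def sdet (K : Type*) [Field K] (d : ℕ) (m : Sub2 d) :
    MvPolynomial (SymIdx d) K :=
  wv K d m.r1 m.c1 * wv K d m.r2 m.c2 - wv K d m.r1 m.c2 * wv K d m.r2 m.c1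

/-- The set of row indices of a `2 × 2` submatrix. -/
def Sub2.rows {d : ℕ} (m : Sub2 d) : Finset (Idx d) := {m.r1, m.r2}

/-- The set of column indices of a `2 × 2` submatrix. -/
def Sub2.cols {d : ℕ} (m : Sub2 d) : Finset (Idx d) := {m.c1, m.c2}

/-- `inA s m` says that the minor `det m` belongs to `A_s`: the row and column index
sets of `m` meet in exactly `s` indices (equivalently, `m` contains exactly `s`
diagonal entries of `M`). -/
def inA {d : ℕ} (s : ℕ) (m : Sub2 d) : Prop := (m.rows ∩ m.cols).card = s

/-- Two `2 × 2` submatrices of `M` are complementary: there is a `4 × 4` principal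
submatrix (with index set `S`, `|S| = 4`) containing both, in which they share no rows
and no columns. -/
def ComplSub2 {d : ℕ} (m n : Sub2 d) : Prop :=
  ∃ S : Finset (Idx d), S.card = 4 ∧ m.rows ∪ n.rows ⊆ S ∧ m.cols ∪ n.cols ⊆ S ∧
    Disjoint m.rows n.rows ∧ Disjoint m.cols n.cols

/-- `δ(m) = 0` if the diagonal entry of `M` appearing in `m` lies on the diagonal of `m`,
and `δ(m) = 1` if it lies on the antidiagonal (intended for minors in `A₁`). -/
def delta {d : ℕ} (m : Sub2 d) : ℕ := if m.r1 = m.c1 ∨ m.r2 = m.c2 then 0 else 1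

/-- `Λ₀`: the ideal generated by the minors in `A₀`. -/
noncomputable def Lam0 (K : Type*) [Field K] (d : ℕ) : Ideal (MvPolynomial (SymIdx d) K) :=
  Ideal.span {f | ∃ m : Sub2 d, inA 0 m ∧ f = sdet K d m}

/-- `Λ₁`: generated by `det m - (-1)^(δ m + δ n) * det n` over complementary pairs in `A₁`. -/
noncomputable def Lam1 (K : Type*) [Field K] (d : ℕ) : Ideal (MvPolynomial (SymIdx d) K) :=
  Ideal.span {f | ∃ m n : Sub2 d, inA 1 m ∧ inA 1 n ∧ ComplSub2 m n ∧
    f = sdet K d m - (-1 : MvPolynomial (SymIdx d) K) ^ (delta m + delta n) * sdet K d n}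

/-- `Λ₂`: generated by `(det m1 + det n1) - (det m2 + det n2)` over pairs of complementary
matrices (PCMs), all four lying in a common `4 × 4` principal submatrix. -/
noncomputable def Lam2 (K : Type*) [Field K] (d : ℕ) : Ideal (MvPolynomial (SymIdx d) K) :=
  Ideal.span {f | ∃ m1 n1 m2 n2 : Sub2 d, inA 2 m1 ∧ inA 2 n1 ∧ inA 2 m2 ∧ inA 2 n2 ∧
    ComplSub2 m1 n1 ∧ ComplSub2 m2 n2 ∧
    (∃ S : Finset (Idx d), S.card = 4 ∧
      m1.rows ∪ m1.cols ∪ n1.rows ∪ n1.cols ∪ m2.rows ∪ m2.cols ∪ n2.rows ∪ n2.cols ⊆ S) ∧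
    f = (sdet K d m1 + sdet K d n1) - (sdet K d m2 + sdet K d n2)}

/-- The candidate ideal `Λ = Λ₀ + Λ₁ + Λ₂`. -/
noncomputable def Lam (K : Type*) [Field K] (d : ℕ) : Ideal (MvPolynomial (SymIdx d) K) :=
  Lam0 K d + Lam1 K d + Lam2 K d

/-- The Hilbert function of an ideal `N ⊆ W` in degree `i`:
the `K`-dimension of the degree-`i` homogeneous component of `N`. -/
noncomputable def HFI (K : Type*) [Field K] (d : ℕ)
    (N : Ideal (MvPolynomial (SymIdx d) K)) (i : ℕ) : ℕ :=
  Module.finrank K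
    ↥(Submodule.restrictScalars K N ⊓ homogeneousSubmodule (SymIdx d) K i)


/-! On a principal minor with rows `{i, j}`, `φ_W` gives
`(x_i² - x_d²)(x_j² - x_d²) - x_i² x_j² = x_d⁴ - x_d² (x_i² + x_j²)`. The rows of two
complementary principal minors partition the common `4`-element index set `S`, so
`φ_W (det m + det n) = 2 x_d⁴ - x_d² ∑_{s ∈ S} x_s²` depends only on `S`. -/

namespace Sub2

variable {d : ℕ}

lemma card_rows (m : Sub2 d) : m.rows.card = 2 :=
  Finset.card_pair m.hr.ne

lemma card_cols (m : Sub2 d) : m.cols.card = 2 :=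
  Finset.card_pair m.hc.ne

lemma cols_eq_rows_of_inA_two {m : Sub2 d} (h : inA 2 m) : m.cols = m.rows := by
  have hrows : m.rows ⊆ m.cols := Finset.inter_eq_left.mp <|
    Finset.eq_of_subset_of_card_le Finset.inter_subset_left (by rw [h, card_rows])
  exact (Finset.eq_of_subset_of_card_le hrows (by rw [card_rows, card_cols])).symm

lemma c1_eq_r1_and_c2_eq_r2_of_inA_two {m : Sub2 d} (h : inA 2 m) :
    m.c1 = m.r1 ∧ m.c2 = m.r2 := by
  have hcols := cols_eq_rows_of_inA_two h
  have hc1 : m.c1 ∈ m.rows := hcols ▸ Finset.mem_insert_self _ _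
  have hc2 : m.c2 ∈ m.rows := hcols ▸ Finset.mem_insert_of_mem (Finset.mem_singleton_self _)
  simp only [rows, Finset.mem_insert, Finset.mem_singleton] at hc1 hc2
  have hr := m.hr
  have hc := m.hc
  rcases hc1 with hc1 | hc1 <;> rcases hc2 with hc2 | hc2 <;> simp_all [lt_asymm]

end Sub2

section PhiW

variable {K : Type*} [Field K] {d : ℕ}

lemma X_eq_xd {i : Idx d} (hi : (i : ℕ) = d) : (X i : MvPolynomial (Idx d) K) = xd K d := by
  rw [xd, dif_pos (hi ▸ i.2.1)]
  exact congrArg X (Subtype.ext hi)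

lemma phiW_wv_of_ne {i j : Idx d} (hij : i ≠ j) : phiW K d (wv K d i j) = X i * X j := by
  have hminmax : min i j ≠ max i j := (min_lt_max.mpr hij).ne
  have hnd : ¬((min i j).1 = d ∧ (max i j).1 = d) :=
    fun h ↦ hminmax (Subtype.ext (h.1.trans h.2.symm))
  rw [wv, dif_neg hnd, phiW, aeval_X]
  dsimp only
  rw [gq, if_neg hminmax]
  rcases le_total i j with h | h
  · rw [min_eq_left h, max_eq_right h]
  · rw [min_eq_right h, max_eq_left h, mul_comm]

/-- Also for `i = d`: there `w_{dd} = 0`, which matches `x_d ^ 2 - x_d ^ 2`. -/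
lemma phiW_wv_self (i : Idx d) : phiW K d (wv K d i i) = X i ^ 2 - xd K d ^ 2 := by
  by_cases hi : (i : ℕ) = d
  · rw [wv, dif_pos (by simp [hi]), map_zero, X_eq_xd hi, sub_self]
  · rw [wv, dif_neg (by simp [hi]), phiW, aeval_X]
    simp [gq]

lemma phiW_sdet_of_inA_two {m : Sub2 d} (h : inA 2 m) :
    phiW K d (sdet K d m) = xd K d ^ 4 - xd K d ^ 2 * ∑ s ∈ m.rows, X s ^ 2 := by
  obtain ⟨h1, h2⟩ := m.c1_eq_r1_and_c2_eq_r2_of_inA_two h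
  rw [sdet, h1, h2, map_sub, map_mul, map_mul, phiW_wv_self, phiW_wv_self,
    phiW_wv_of_ne m.hr.ne, phiW_wv_of_ne m.hr.ne.symm, Sub2.rows, Finset.sum_pair m.hr.ne]
  ring

lemma phiW_sdet_add_sdet_of_disjoint_rows {m n : Sub2 d} {S : Finset (Idx d)}
    (hm : inA 2 m) (hn : inA 2 n) (hdisj : Disjoint m.rows n.rows) (hS : S.card = 4)
    (hsub : m.rows ∪ n.rows ⊆ S) :
    phiW K d (sdet K d m + sdet K d n) =
      2 * xd K d ^ 4 - xd K d ^ 2 * ∑ s ∈ S, X s ^ 2 := by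
  have hcover : m.rows ∪ n.rows = S := Finset.eq_of_subset_of_card_le hsub <| by
    rw [hS, Finset.card_union_of_disjoint hdisj, m.card_rows, n.card_rows]
  rw [map_add, phiW_sdet_of_inA_two hm, phiW_sdet_of_inA_two hn, ← hcover,
    Finset.sum_union hdisj]
  ring

end PhiW

theorem Lam2_le_fiber_ideal_general (K : Type*) [Field K] (d : ℕ) :
    Lam2 K d ≤ IX K d := by
  refine Ideal.span_le.mpr ?_
  rintro _ ⟨m1, n1, m2, n2, hm1, hn1, hm2, hn2, ⟨-, -, -, -, hdisj1, -⟩,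
    ⟨-, -, -, -, hdisj2, -⟩, ⟨S, hS, hsub⟩, rfl⟩
  have hsub1 : m1.rows ∪ n1.rows ⊆ S := fun x hx ↦ hsub <| by
    simp only [Finset.mem_union] at hx ⊢; tauto
  have hsub2 : m2.rows ∪ n2.rows ⊆ S := fun x hx ↦ hsub <| by
    simp only [Finset.mem_union] at hx ⊢; tauto
  have h1 := phiW_sdet_add_sdet_of_disjoint_rows (K := K) hm1 hn1 hdisj1 hS hsub1
  have h2 := phiW_sdet_add_sdet_of_disjoint_rows (K := K) hm2 hn2 hdisj2 hS hsub2
  change phiW K d _ = 0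
  rw [map_sub, h1, h2, sub_self]

/-- For every PCM `(m₁,n₁),(m₂,n₂)`, the element `(det m₁ + det n₁) - (det m₂ + det n₂)`
lies in `ker φ_W`; i.e. `Λ₂ ⊆ I(X)`. -/
theorem Lam2_le_fiber_ideal (K : Type*) [Field K] [CharZero K] (d : ℕ) (hd : 4 ≤ d) :
    Lam2 K d ≤ IX K d :=
  Lam2_le_fiber_ideal_general K d
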